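/- arXiv:2112.00998 — 2 statements merged into one kernel-verified Lean document; each statement's English description precedes it below -/
import Mathlib

section
/- Assume φ is a soliton family with constants ω₀, C. There exist ω₁ ≥ ω₀ and K > 0 such that for all ω > ω₁ and θ ∈ ℝ: φ_ω(0) ≠ 0, ∂_ωφ_ω(0) ≠ 0, the restriction of P₀⊥ to H_c[θ,ω] is a bijection onto P₀⊥l², its inverse Q[θ,ω] : P₀⊥l² → H_c[θ,ω] is given by Q[θ,ω]u = u + e^{iθ}( -φ_ω(0)^{-1} Ω(u, ∂_θφ[θ,ω]) + i (∂_ωφ_ω(0))^{-1} Ω(u, ∂_ωφ[θ,ω]) ) δ₀, and for all u ∈ P₀⊥l², ‖u - Q[θ,ω]u‖_{l²_1} ≤ K ω^{-1} ‖u‖_{l²_{-1}}. -/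
noncomputable section

open scoped BigOperators ENNReal
open MeasureTheory Complex Filter

/-! ## Sequence spaces and norms -/

/-- Square-summable complex sequences `ℓ²(ℤ;ℂ)`. -/
abbrev L2 := lp (fun _ : ℤ => ℂ) 2
/-- Square-summable real sequences `ℓ²(ℤ;ℝ)`. -/
abbrev L2R := lp (fun _ : ℤ => ℝ) 2
/-- Bounded real sequences `ℓ^∞(ℕ₀;ℝ)`. -/
abbrev LinfN := lp (fun _ : ℕ => ℝ) ⊤

/-- Discrete Laplacian on raw complex sequences. -/
def lapC (u : ℤ → ℂ) : ℤ → ℂ := fun x => u (x + 1) - 2 * u x + u (x - 1)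

/-- Discrete Laplacian on raw real sequences. -/
def lapR (u : ℤ → ℝ) : ℤ → ℝ := fun x => u (x + 1) - 2 * u x + u (x - 1)

/-- Exponential weight `e^{a|x|}`. -/
def wt (a : ℝ) (x : ℤ) : ℝ := Real.exp (a * |(x : ℝ)|)

/-- `ℝ≥0∞`-valued weighted `ℓ²` norm `‖u‖_{l²_a} = ‖e^{a|·|}u‖_{l²}`. -/
def el2w (a : ℝ) (u : ℤ → ℂ) : ℝ≥0∞ :=
  (∑' x : ℤ, ((‖u x‖₊ : ℝ≥0∞) * ENNReal.ofReal (wt a x)) ^ (2 : ℕ)) ^ ((1 : ℝ) / 2)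

/-- `ℝ≥0∞`-valued `ℓ²` norm. -/
def el2 (u : ℤ → ℂ) : ℝ≥0∞ := el2w 0 u

/-- `ℝ≥0∞`-valued `ℓ¹` norm. -/
def el1 (u : ℤ → ℂ) : ℝ≥0∞ := ∑' x : ℤ, (‖u x‖₊ : ℝ≥0∞)

/-- `ℝ≥0∞`-valued `ℓ^∞` norm. -/
def elinf (u : ℤ → ℂ) : ℝ≥0∞ := ⨆ x : ℤ, (‖u x‖₊ : ℝ≥0∞)

/-- `L^q` norm in time over the set `I` of an `ℝ≥0∞`-valued function. -/
def LqT (q : ℝ) (I : Set ℝ) (F : ℝ → ℝ≥0∞) : ℝ≥0∞ := (∫⁻ t in I, F t ^ q) ^ (1 / q)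

/-- `L^∞` norm in time over the set `I` of an `ℝ≥0∞`-valued function. -/
def LinfT (I : Set ℝ) (F : ℝ → ℝ≥0∞) : ℝ≥0∞ := essSup F (volume.restrict I)

/-- The `Strichartz` norm `L^∞(I,l²) ∩ L⁶(I,l^∞)` of a time-dependent sequence. -/
def StzT (I : Set ℝ) (F : ℝ → ℤ → ℂ) : ℝ≥0∞ :=
  LinfT I (fun t => el2 (F t)) + LqT 6 I (fun t => elinf (F t))

/-- The `L¹ ∩ L^∞` norm in time of a scalar function. -/
def L1LinfT (I : Set ℝ) (g : ℝ → ℝ) : ℝ≥0∞ :=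
  LqT 1 I (fun t => (‖g t‖₊ : ℝ≥0∞)) + LinfT I (fun t => (‖g t‖₊ : ℝ≥0∞))

/-! ## The discrete Laplacian and its unitary group -/

lemma memℓp_translate (k : ℤ) (u : L2) : Memℓp (fun x : ℤ => u (x + k)) 2 := by
  apply memℓp_gen
  have hs : Summable fun x : ℤ => ‖u x‖ ^ (2 : ℝ≥0∞).toReal :=
    (memℓp_gen_iff (by norm_num)).1 (lp.memℓp u)
  exact ((Equiv.addRight k).summable_iff
    (f := fun x : ℤ => ‖u x‖ ^ (2 : ℝ≥0∞).toReal)).2 hs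

lemma norm_translate (k : ℤ) (u : L2) :
    ‖(⟨fun x : ℤ => u (x + k), memℓp_translate k u⟩ : L2)‖ = ‖u‖ := by
  rw [lp.norm_eq_tsum_rpow (by norm_num), lp.norm_eq_tsum_rpow (by norm_num)]
  congr 1
  exact (Equiv.addRight k).tsum_eq (f := fun x : ℤ => ‖u x‖ ^ (2 : ℝ≥0∞).toReal)

/-- Translation `u ↦ u(· + k)` as a linear map on `ℓ²(ℤ;ℂ)`. -/
def translateLM (k : ℤ) : L2 →ₗ[ℂ] L2 where
  toFun u := ⟨fun x => u (x + k), memℓp_translate k u⟩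
  map_add' u v := by ext x; simp [lp.coeFn_add]; rfl
  map_smul' c u := by ext x; simp [lp.coeFn_smul]

/-- Translation as a continuous linear map on `ℓ²(ℤ;ℂ)`. -/
def translateCLM (k : ℤ) : L2 →L[ℂ] L2 :=
  LinearMap.mkContinuous (translateLM k) 1 (by
    intro u; rw [one_mul]; exact le_of_eq (norm_translate k u))

/-- The discrete Laplacian `(Δ_d u)(x) = u(x+1) - 2u(x) + u(x-1)` as a bounded operator
on `ℓ²(ℤ;ℂ)`. -/
def DeltaD : L2 →L[ℂ] L2 :=
  translateCLM 1 + translateCLM (-1) - 2 • ContinuousLinearMap.id ℂ L2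

lemma DeltaD_apply (u : L2) (x : ℤ) :
    DeltaD u x = u (x + 1) - 2 * u x + u (x - 1) := by
  simp [DeltaD, translateCLM, translateLM, LinearMap.mkContinuous,
    lp.coeFn_add, lp.coeFn_sub, lp.coeFn_smul, sub_eq_add_neg]
  ring_nf
  change u (1 + x) + u (-1 + x) - 2 * u x = _
  ring

/-- The Kronecker delta at `0` as an element of `ℓ²(ℤ;ℂ)`. -/
def e0C : L2 := lp.single 2 (0 : ℤ) (1 : ℂ)

lemma norm_e0C : ‖e0C‖ = 1 := by
  have := lp.norm_single (p := 2) (E := fun _ : ℤ => ℂ) (by norm_num)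
    (0 : ℤ) (1 : ℂ)
  simpa [e0C] using this

/-- The projection `P₀⊥ u = u - (u,δ₀)δ₀` as a bounded operator on `ℓ²(ℤ;ℂ)`. -/
def P0perp : L2 →L[ℂ] L2 :=
  LinearMap.mkContinuous
    { toFun := fun u => u - (u 0) • e0C
      map_add' := fun u v => by
        have h : (↑(u + v) : ∀ _ : ℤ, ℂ) 0 = u 0 + v 0 := by
          rw [lp.coeFn_add]; rfl
        show (u + v) - ((u + v : L2) 0) • e0C = (u - (u 0) • e0C) + (v - (v 0) • e0C)
        rw [h, add_smul]; abel
      map_smul' := fun c u => by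
        have h : (↑(c • u) : ∀ _ : ℤ, ℂ) 0 = c * u 0 := by
          rw [lp.coeFn_smul]; rfl
        show (c • u) - ((c • u : L2) 0) • e0C = (RingHom.id ℂ) c • (u - (u 0) • e0C)
        rw [h, RingHom.id_apply, mul_smul, ← smul_sub] }
    2 (by
      intro u
      have h2 : ‖u 0‖ ≤ ‖u‖ := lp.norm_apply_le_norm (by norm_num) u 0
      calc ‖u - (u 0) • e0C‖ ≤ ‖u‖ + ‖(u 0) • e0C‖ := norm_sub_le _ _
        _ = ‖u‖ + ‖u 0‖ * ‖e0C‖ := by rw [norm_smul]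
        _ ≤ 2 * ‖u‖ := by rw [norm_e0C]; linarith)

lemma P0perp_apply (u : L2) (x : ℤ) :
    P0perp u x = if x = 0 then 0 else u x := by
  have h : P0perp u = u - (u 0) • e0C := rfl
  rw [h, lp.coeFn_sub, lp.coeFn_smul]
  by_cases hx : x = 0 <;>
    simp [hx, e0C, lp.single_apply, Pi.sub_apply, Pi.smul_apply]

/-- `Δ₀ = P₀⊥ Δ_d P₀⊥`, the discrete Laplacian restricted to `P₀⊥ ℓ²`. -/
def Delta0 : L2 →L[ℂ] L2 := P0perp.comp (DeltaD.comp P0perp)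

/-- The unitary group `e^{itΔ_d}`. -/
def Ud (t : ℝ) : L2 →L[ℂ] L2 := NormedSpace.exp ((Complex.I * t) • DeltaD)

/-- The unitary group `e^{itΔ₀}`. -/
def U0 (t : ℝ) : L2 →L[ℂ] L2 := NormedSpace.exp ((Complex.I * t) • Delta0)

/-- Domination criterion for membership in `ℓ²`. -/
lemma memℓp_of_le (u : L2) (f : ℤ → ℂ) (h : ∀ x, ‖f x‖ ≤ ‖u x‖) : Memℓp f 2 := by
  apply memℓp_gen
  have hs : Summable fun x : ℤ => ‖u x‖ ^ (2 : ℝ≥0∞).toReal :=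
    (memℓp_gen_iff (by norm_num)).1 (lp.memℓp u)
  refine hs.of_nonneg_of_le (fun x => ?_) (fun x => ?_)
  · positivity
  · exact Real.rpow_le_rpow (norm_nonneg _) (h x) (by norm_num)

/-- The restriction `P₊` to `{x ≥ 1}`. -/
def Pplus (u : L2) : L2 :=
  ⟨fun x => if 1 ≤ x then u x else 0,
    memℓp_of_le u _ (fun x => by by_cases h : 1 ≤ x <;> simp [h])⟩

/-- The restriction `P₋` to `{x ≤ -1}`. -/
def Pminus (u : L2) : L2 :=
  ⟨fun x => if x ≤ -1 then u x else 0,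
    memℓp_of_le u _ (fun x => by by_cases h : x ≤ -1 <;> simp [h])⟩

/-- Duhamel term `∫₀ᵗ e^{i(t-s)Δ₀} P₀⊥ f(s) ds`. -/
def duhamel (f : ℝ → L2) (t : ℝ) : L2 := ∫ s in (0 : ℝ)..t, U0 (t - s) (P0perp (f s))

/-! ## Soliton families -/

/-- The Kronecker delta at `0` in `ℓ²(ℤ;ℝ)`. -/
def e0R : L2R := lp.single 2 (0 : ℤ) (1 : ℝ)

/-- `P₀⊥` on real `ℓ²`. -/
def P0R (u : L2R) : L2R := u - (u 0) • e0R

/-- A family of solitons `φ_ω`, `ω ∈ (ω₀,∞)`, as in Proposition 1.2 of the paper.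
The data is recorded through the weighted sequences `Φ ω = e^{10|·|} φ_ω ∈ ℓ²(ℤ;ℝ)`
(so that `φ_ω = e^{-10|·|} Φ ω`, the map `ω ↦ φ_ω` is twice continuously differentiable
into `l²_{10}` iff `ω ↦ Φ ω` is so into `ℓ²`, and `l²_{10}`-norm statements about `φ_ω`
are plain `ℓ²`-norm statements about `Φ ω`), together with its first and second
derivatives in `ω`.  The fields state: `ω ↦ φ_ω` is `C²` from `(ω₀,∞)` to `l²_{10}`;
`φ_ω` solves `0 = -Δ_d φ_ω + ω φ_ω - |φ_ω|⁶ φ_ω`; and the two weighted estimates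
`∑_{j=0}^{2} ω^j ‖∂_ω^j φ_ω - ∂_ω^j(ω^{1/6} δ₀)‖_{l²_{10}} ≤ C ω^{-5/6}` and
`∑_{j=0}^{2} ω^j ‖P₀⊥ ∂_ω^j φ_ω‖_{l²_{10}} ≤ C ω^{-5/6}` hold (note
`∂_ω(ω^{1/6}δ₀) = (1/6)ω^{-5/6}δ₀` and `∂_ω²(ω^{1/6}δ₀) = -(5/36)ω^{-11/6}δ₀`). -/
structure SolitonFamily (ω₀ C : ℝ) : Type where
  Φ : ℝ → L2R
  Φ' : ℝ → L2R
  Φ'' : ℝ → L2R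
  hasDeriv1 : ∀ ω ∈ Set.Ioi ω₀, HasDerivAt Φ (Φ' ω) ω
  hasDeriv2 : ∀ ω ∈ Set.Ioi ω₀, HasDerivAt Φ' (Φ'' ω) ω
  contDeriv2 : ContinuousOn Φ'' (Set.Ioi ω₀)
  eqn : ∀ ω ∈ Set.Ioi ω₀, ∀ x : ℤ,
    0 = -(lapR (fun y => wt (-10) y * Φ ω y) x) + ω * (wt (-10) x * Φ ω x)
        - |wt (-10) x * Φ ω x| ^ 6 * (wt (-10) x * Φ ω x)
  approx : ∀ ω ∈ Set.Ioi ω₀,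
      ‖Φ ω - (ω ^ ((1 : ℝ) / 6)) • e0R‖
    + ω * ‖Φ' ω - ((1 / 6 : ℝ) * ω ^ (-(5 : ℝ) / 6)) • e0R‖
    + ω ^ 2 * ‖Φ'' ω - ((-5 / 36 : ℝ) * ω ^ (-(11 : ℝ) / 6)) • e0R‖
      ≤ C * ω ^ (-(5 : ℝ) / 6)
  perp : ∀ ω ∈ Set.Ioi ω₀,
      ‖P0R (Φ ω)‖ + ω * ‖P0R (Φ' ω)‖ + ω ^ 2 * ‖P0R (Φ'' ω)‖ ≤ C * ω ^ (-(5 : ℝ) / 6)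

namespace SolitonFamily
variable {ω₀ C : ℝ} (sf : SolitonFamily ω₀ C)

/-- The soliton `φ_ω` as a raw real sequence. -/
def phiF (ω : ℝ) : ℤ → ℝ := fun x => wt (-10) x * sf.Φ ω x
/-- `∂_ω φ_ω` as a raw real sequence. -/
def dphiF (ω : ℝ) : ℤ → ℝ := fun x => wt (-10) x * sf.Φ' ω x
/-- `∂²_ω φ_ω` as a raw real sequence. -/
def d2phiF (ω : ℝ) : ℤ → ℝ := fun x => wt (-10) x * sf.Φ'' ω x
/-- `φ[θ,ω] = e^{iθ} φ_ω`. -/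
def phiC (θ ω : ℝ) : ℤ → ℂ := fun x => Complex.exp (Complex.I * θ) * (sf.phiF ω x : ℂ)
/-- `∂_θ φ[θ,ω] = i e^{iθ} φ_ω`. -/
def dthphiC (θ ω : ℝ) : ℤ → ℂ :=
  fun x => Complex.I * Complex.exp (Complex.I * θ) * (sf.phiF ω x : ℂ)
/-- `∂_ω φ[θ,ω] = e^{iθ} ∂_ω φ_ω`. -/
def dOmphiC (θ ω : ℝ) : ℤ → ℂ := fun x => Complex.exp (Complex.I * θ) * (sf.dphiF ω x : ℂ)

end SolitonFamily

/-- The real inner product `⟨u,v⟩ = Re ∑_x u(x) conj(v(x))`. -/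
def rip (u v : ℤ → ℂ) : ℝ := ∑' x : ℤ, (u x * (starRingEnd ℂ) (v x)).re

/-- The symplectic form `Ω(u,v) = ⟨iu, v⟩`. -/
def Om (u v : ℤ → ℂ) : ℝ := rip (fun x => Complex.I * u x) v

namespace SolitonFamily
variable {ω₀ C : ℝ} (sf : SolitonFamily ω₀ C)

/-- `H_c[θ,ω] = {u ∈ ℓ² : Ω(u, ∂_θφ[θ,ω]) = Ω(u, ∂_ωφ[θ,ω]) = 0}`. -/
def Hc (θ ω : ℝ) : Set L2 :=
  {v : L2 | Om (fun x => v x) (sf.dthphiC θ ω) = 0 ∧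
            Om (fun x => v x) (sf.dOmphiC θ ω) = 0}

/-- The tube `T_{ω*}(r) = {u : inf_θ ‖u - φ[θ,ω*]‖_{l²} < r}` around the soliton orbit. -/
def Tset (ωs r : ℝ) : Set L2 :=
  {u : L2 | (⨅ θ : ℝ, el2 (fun x => u x - sf.phiC θ ωs x)) < ENNReal.ofReal r}

end SolitonFamily

/-- `u` is a `C¹` solution of DNLS `i ∂_t u = -Δ_d u - |u|⁶ u` on the time set `S`,
with derivative `u'`. -/
def IsDNLS (u u' : ℝ → L2) (S : Set ℝ) : Prop :=
  ContinuousOn u' S ∧ ∀ t ∈ S, HasDerivWithinAt u (u' t) S t ∧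
    ∀ x : ℤ, Complex.I * (u' t) x
      = -(lapC (fun y => (u t) y) x) - (‖(u t) x‖ : ℂ) ^ 6 * (u t) x

/-- The modulation remainder `ξ(t) = u(t) - φ[θ(t),ω(t)]` as a raw sequence. -/
def xiF {ω₀ C : ℝ} (sf : SolitonFamily ω₀ C) (u : ℝ → L2) (θ ω : ℝ → ℝ) (t : ℝ) :
    ℤ → ℂ := fun x => u t x - sf.phiC (θ t) (ω t) x

/-- `η(t) = P₀⊥ ξ(t)` as a raw sequence. -/
def etaF {ω₀ C : ℝ} (sf : SolitonFamily ω₀ C) (u : ℝ → L2) (θ ω : ℝ → ℝ) (t : ℝ) :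
    ℤ → ℂ := fun x => if x = 0 then 0 else xiF sf u θ ω t x

/-- The scalar coefficient appearing in the inverse `Q[θ,ω]` of `P₀⊥|_{H_c[θ,ω]}`. -/
def Qcoef {ω₀ C : ℝ} (sf : SolitonFamily ω₀ C) (θ ω : ℝ) (u : L2) : ℂ :=
  Complex.exp (Complex.I * θ) *
    (((-(sf.phiF ω 0)⁻¹ * Om (fun x => u x) (sf.dthphiC θ ω) : ℝ) : ℂ)
      + Complex.I * (((sf.dphiF ω 0)⁻¹ * Om (fun x => u x) (sf.dOmphiC θ ω) : ℝ) : ℂ))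

/-- The map `Q[θ,ω] u = u + e^{iθ}(-φ_ω(0)⁻¹ Ω(u,∂_θφ) + i (∂_ωφ_ω(0))⁻¹ Ω(u,∂_ωφ)) δ₀`. -/
def Qmap {ω₀ C : ℝ} (sf : SolitonFamily ω₀ C) (θ ω : ℝ) (u : L2) : L2 :=
  u + lp.single 2 (0 : ℤ) (Qcoef sf θ ω u)

/-- The (ℝ-linear) linearized operator
`H[θ,ω]u = -Δ_d u - 4|φ[θ,ω]|⁶ u - 3|φ[θ,ω]|⁴ φ[θ,ω]² conj(u)`. -/
def Hop {ω₀ C : ℝ} (sf : SolitonFamily ω₀ C) (θ ω : ℝ) (u : ℤ → ℂ) : ℤ → ℂ :=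
  fun x => -(lapC u x) - 4 * (‖sf.phiC θ ω x‖ : ℂ) ^ 6 * u x
    - 3 * (‖sf.phiC θ ω x‖ : ℂ) ^ 4 * (sf.phiC θ ω x) ^ 2 * (starRingEnd ℂ) (u x)

/-- The soliton of the appendix (anti-continuous limit) construction:
`φ_ω = ω^{1/6}((1 + ω⁻¹ψ₀(ω⁻¹))δ₀ + ∑_{j≥1} ω^{-j} ψ_j(ω⁻¹)(δ_j + δ_{-j}))`. -/
def phiOf (ψ : ℝ → LinfN) (ω : ℝ) : ℤ → ℝ :=
  fun x => ω ^ ((1 : ℝ) / 6) *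
    (if x = 0 then 1 + ω⁻¹ * ψ ω⁻¹ 0
     else ω ^ (-(x.natAbs : ℝ)) * ψ ω⁻¹ x.natAbs)


/-!
Every `v ∈ ℓ²` splits as `v = P₀⊥v + v(0)δ₀`, and `∂_θφ[θ,ω](0) = ie^{iθ}φ_ω(0)`,
`∂_ωφ[θ,ω](0) = e^{iθ}∂_ωφ_ω(0)`. Hence the two conditions defining `H_c[θ,ω]` fix the real and
imaginary parts of `e^{-iθ}v(0)` in terms of `Ω(P₀⊥v, ∂_θφ)` and `Ω(P₀⊥v, ∂_ωφ)`, as soon as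
`φ_ω(0) ≈ ω^{1/6}` and `∂_ωφ_ω(0) ≈ ω^{-5/6}/6` are nonzero; this is the formula for `Q[θ,ω]`.
For `u(0) = 0` only `P₀⊥φ_ω = O(ω^{-5/6})` and `P₀⊥∂_ωφ_ω = O(ω^{-11/6})` (in `l²_{10}`) enter
the two pairings, so after division by `φ_ω(0)` and `∂_ωφ_ω(0)` the correction `u - Q[θ,ω]u`,
which is supported at `0`, is `O(ω^{-1}) ‖u‖_{l²_{-1}}`.
-/

open ComplexConjugate

lemma wt_pos (a : ℝ) (x : ℤ) : 0 < wt a x := Real.exp_pos _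

lemma wt_zero (a : ℝ) : wt a 0 = 1 := by simp [wt]

lemma wt_mono {a b : ℝ} (hab : a ≤ b) (x : ℤ) : wt a x ≤ wt b x :=
  Real.exp_le_exp.2 (mul_le_mul_of_nonneg_right hab (abs_nonneg _))

lemma wt_le_one {a : ℝ} (ha : a ≤ 0) (x : ℤ) : wt a x ≤ 1 := by
  simpa [wt] using wt_mono ha x

lemma memℓp_norm_mul_wt {a : ℝ} (ha : a ≤ 0) (u : L2) :
    Memℓp (fun x => ‖u x‖ * wt a x) 2 :=
  (lp.memℓp u).mono' fun x => by
    rw [norm_mul, norm_norm, Real.norm_of_nonneg (wt_pos a x).le]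
    exact mul_le_of_le_one_right (norm_nonneg _) (wt_le_one ha x)

lemma el2w_eq_ofReal_norm {a : ℝ} {u : ℤ → ℂ} (F : L2R) (hF : ∀ x, F x = ‖u x‖ * wt a x) :
    el2w a u = ENNReal.ofReal ‖F‖ := by
  have hterm : ∀ x, ((‖u x‖₊ : ℝ≥0∞) * ENNReal.ofReal (wt a x)) ^ (2 : ℕ)
      = ENNReal.ofReal (‖F x‖ ^ (2 : ℝ)) := by
    intro x
    rw [hF, Real.norm_of_nonneg (by positivity [wt_pos a x]), Real.rpow_two,
      ENNReal.ofReal_pow (by positivity [wt_pos a x]), ENNReal.ofReal_mul (norm_nonneg _),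
      ofReal_norm]
    rfl
  have hsum : Summable fun x => ‖F x‖ ^ (2 : ℝ) := by
    simpa using (lp.memℓp F).summable (p := 2) (by norm_num)
  rw [el2w, tsum_congr hterm, ← ENNReal.ofReal_tsum_of_nonneg (fun _ => by positivity) hsum,
    ENNReal.ofReal_rpow_of_nonneg (tsum_nonneg fun _ => by positivity) (by norm_num),
    lp.norm_eq_tsum_rpow (by norm_num)]
  norm_num

lemma el2w_eq_enorm_of_eq_zero {a : ℝ} {f : ℤ → ℂ} (hf : ∀ x ≠ 0, f x = 0) :
    el2w a f = ‖f 0‖ₑ := by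
  rw [el2w, tsum_eq_single 0 fun x hx => by simp [hf x hx], wt_zero, ENNReal.ofReal_one,
    mul_one, ← ENNReal.rpow_natCast, ← ENNReal.rpow_mul]
  norm_num
  rfl

lemma abs_Om_le_norm_mul_norm {u w : ℤ → ℂ} (F G : L2R)
    (h : ∀ x, ‖u x‖ * ‖w x‖ ≤ ‖F x‖ * ‖G x‖) : |Om u w| ≤ ‖F‖ * ‖G‖ := by
  have hFG := lp.tsum_mul_le_mul_norm (p := 2) (q := 2)
    (by norm_num [Real.HolderConjugate.two_two]) F G
  have hterm : ∀ x, ‖(I * u x * conj (w x)).re‖ ≤ ‖F x‖ * ‖G x‖ := fun x =>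
    (abs_re_le_norm _).trans (by simpa using h x)
  exact (tsum_of_norm_bounded hFG.1.hasSum hterm).trans hFG.2

lemma Om_add_single (u : L2) (c : ℂ) {w : ℤ → ℂ} (hw : Memℓp w 2) :
    Om ⇑(u + (lp.single 2 0 c : L2)) w = Om ⇑u w + (I * c * conj (w 0)).re := by
  have hu : Summable fun x => (I * u x * conj (w x)).re := by
    refine (Complex.reCLM.summable ((lp.summable_inner (⟨w, hw⟩ : L2) u).mul_left I)).congr
      fun x => ?_
    simp [mul_comm]
  have hc : Summable fun x => (I * (Pi.single 0 c : ℤ → ℂ) x * conj (w x)).re :=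
    summable_of_ne_finset_zero (s := {0}) fun x hx => by simp_all
  simp only [Om, rip, lp.coeFn_add, lp.coeFn_single, Pi.add_apply, mul_add, add_mul,
    Complex.add_re]
  rw [hu.tsum_add hc, add_right_inj, tsum_eq_single 0 fun x hx => by simp [hx]]
  simp

lemma conj_exp_I_mul (θ : ℝ) : conj (exp (I * θ)) = exp (-(I * θ)) := by
  rw [← Complex.exp_conj, map_mul, Complex.conj_I, Complex.conj_ofReal, neg_mul]

lemma eq_exp_mul_iff (θ a b : ℝ) (z : ℂ) :
    z = exp (I * θ) * ((a : ℂ) + I * (b : ℂ)) ↔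
      (exp (-(I * θ)) * z).re = a ∧ (exp (-(I * θ)) * z).im = b := by
  have hz : z = exp (I * θ) * (exp (-(I * θ)) * z) := by
    rw [← mul_assoc, ← Complex.exp_add, add_neg_cancel, Complex.exp_zero, one_mul]
  constructor
  · intro h
    rw [h, ← mul_assoc, ← Complex.exp_add, neg_add_cancel, Complex.exp_zero, one_mul]
    simp
  · rintro ⟨hre, him⟩
    have hw : exp (-(I * θ)) * z = (a : ℂ) + I * (b : ℂ) :=
      Complex.ext (by simp [hre]) (by simp [him])
    rw [hz, hw]

lemma norm_exp_mul_add_I_mul_le (θ a b : ℝ) :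
    ‖exp (I * θ) * ((a : ℂ) + I * (b : ℂ))‖ ≤ |a| + |b| := by
  rw [norm_mul, Complex.norm_exp_I_mul_ofReal, one_mul]
  exact (norm_add_le _ _).trans (by simp)

lemma P0perp_apply_zero (v : L2) : P0perp v 0 = 0 := by simp [P0perp_apply]

lemma P0perp_eq_self {u : L2} (hu : u 0 = 0) : P0perp u = u := by
  ext x
  by_cases hx : x = 0 <;> simp [P0perp_apply, hx, hu]

lemma P0perp_add_single_zero (u : L2) (c : ℂ) : P0perp (u + lp.single 2 0 c) = P0perp u := by
  ext x
  by_cases hx : x = 0 <;> simp [P0perp_apply, hx]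

lemma P0perp_add_single_apply_zero (v : L2) : P0perp v + lp.single 2 0 (v 0) = v := by
  ext x
  by_cases hx : x = 0 <;> simp [P0perp_apply, hx]

lemma Qmap_apply {ω₀ C : ℝ} (sf : SolitonFamily ω₀ C) (θ ω : ℝ) (u : L2) (x : ℤ) :
    Qmap sf θ ω u x = u x + (Pi.single 0 (Qcoef sf θ ω u) : ℤ → ℂ) x := by
  simp [Qmap]

lemma rpow_one_sixth_eq_mul {ω : ℝ} (hω : 0 < ω) :
    ω ^ ((1 : ℝ) / 6) = ω * ω ^ (-(5 : ℝ) / 6) := by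
  rw [← Real.rpow_one_add' hω.le (by norm_num)]
  norm_num

lemma abs_apply_zero_sub_le (F : L2R) (r : ℝ) : |F 0 - r| ≤ ‖F - r • e0R‖ := by
  have h := lp.norm_apply_le_norm (p := 2) (by norm_num) (F - r • e0R) 0
  rwa [lp.coeFn_sub, Pi.sub_apply, lp.coeFn_smul, Pi.smul_apply, e0R,
    lp.single_apply_self, smul_eq_mul, mul_one, Real.norm_eq_abs] at h

lemma P0R_apply_of_ne (F : L2R) {x : ℤ} (hx : x ≠ 0) : P0R F x = F x := by
  rw [P0R, lp.coeFn_sub, Pi.sub_apply, lp.coeFn_smul, Pi.smul_apply, e0R,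
    lp.single_apply_ne 2 0 _ hx, smul_zero, sub_zero]

namespace SolitonFamily

variable {ω₀ C : ℝ} (sf : SolitonFamily ω₀ C) {θ ω : ℝ}

section Asymptotics

variable (hω₀ : ω₀ < ω) (hω : 0 < ω)
include hω₀ hω

lemma norm_P0R_Φ_le : ‖P0R (sf.Φ ω)‖ ≤ C * ω ^ (-(5 : ℝ) / 6) := by
  have hperp := sf.perp ω hω₀
  have : 0 ≤ ω * ‖P0R (sf.Φ' ω)‖ + ω ^ 2 * ‖P0R (sf.Φ'' ω)‖ := by positivity
  linarith

lemma norm_P0R_Φ'_le : ‖P0R (sf.Φ' ω)‖ ≤ C * ω ^ (-(5 : ℝ) / 6) / ω := by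
  have hperp := sf.perp ω hω₀
  have : 0 ≤ ‖P0R (sf.Φ ω)‖ + ω ^ 2 * ‖P0R (sf.Φ'' ω)‖ := by positivity
  rw [le_div_iff₀ hω]
  linarith

lemma abs_Φ_zero_sub_le : |sf.Φ ω 0 - ω ^ ((1 : ℝ) / 6)| ≤ C * ω ^ (-(5 : ℝ) / 6) := by
  have happrox := sf.approx ω hω₀
  have hcoord := abs_apply_zero_sub_le (sf.Φ ω) (ω ^ ((1 : ℝ) / 6))
  have : 0 ≤ ω * ‖sf.Φ' ω - ((1 / 6 : ℝ) * ω ^ (-(5 : ℝ) / 6)) • e0R‖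
      + ω ^ 2 * ‖sf.Φ'' ω - ((-5 / 36 : ℝ) * ω ^ (-(11 : ℝ) / 6)) • e0R‖ := by positivity
  linarith

lemma abs_Φ'_zero_sub_le :
    |sf.Φ' ω 0 - 1 / 6 * ω ^ (-(5 : ℝ) / 6)| ≤ C * ω ^ (-(5 : ℝ) / 6) / ω := by
  have happrox := sf.approx ω hω₀
  have hcoord := mul_le_mul_of_nonneg_left
    (abs_apply_zero_sub_le (sf.Φ' ω) (1 / 6 * ω ^ (-(5 : ℝ) / 6))) hω.le
  have : 0 ≤ ‖sf.Φ ω - (ω ^ ((1 : ℝ) / 6)) • e0R‖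
      + ω ^ 2 * ‖sf.Φ'' ω - ((-5 / 36 : ℝ) * ω ^ (-(11 : ℝ) / 6)) • e0R‖ := by positivity
  rw [le_div_iff₀ hω]
  linarith

lemma phiF_zero_ge (hCω : 12 * C < ω) : ω ^ ((1 : ℝ) / 6) / 2 ≤ sf.phiF ω 0 := by
  have h := abs_le.1 (sf.abs_Φ_zero_sub_le hω₀ hω)
  have hP : 0 < ω ^ (-(5 : ℝ) / 6) := Real.rpow_pos_of_pos hω _
  have hCP : C * ω ^ (-(5 : ℝ) / 6) ≤ ω * ω ^ (-(5 : ℝ) / 6) / 2 := by nlinarith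
  rw [rpow_one_sixth_eq_mul hω] at h ⊢
  rw [phiF, wt_zero, one_mul]
  linarith

lemma dphiF_zero_ge (hCω : 12 * C < ω) : ω ^ (-(5 : ℝ) / 6) / 12 ≤ sf.dphiF ω 0 := by
  have h := abs_le.1 (sf.abs_Φ'_zero_sub_le hω₀ hω)
  have hP : 0 < ω ^ (-(5 : ℝ) / 6) := Real.rpow_pos_of_pos hω _
  have hCP : C * ω ^ (-(5 : ℝ) / 6) / ω ≤ ω ^ (-(5 : ℝ) / 6) / 12 := by
    rw [div_le_iff₀ hω]
    nlinarith
  rw [dphiF, wt_zero, one_mul]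
  linarith

end Asymptotics

lemma C_nonneg (sf : SolitonFamily ω₀ C) : 0 ≤ C := by
  have hω₀ : ω₀ < max ω₀ 0 + 1 := by linarith [le_max_left ω₀ 0]
  have hω : 0 < max ω₀ 0 + 1 := by linarith [le_max_right ω₀ 0]
  exact nonneg_of_mul_nonneg_left ((norm_nonneg _).trans (sf.norm_P0R_Φ_le hω₀ hω))
    (Real.rpow_pos_of_pos hω _)

lemma norm_dthphiC (x : ℤ) : ‖sf.dthphiC θ ω x‖ = wt (-10) x * |sf.Φ ω x| := by
  simp [dthphiC, phiF, Complex.norm_exp_I_mul_ofReal, abs_of_pos (wt_pos _ _)]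

lemma norm_dOmphiC (x : ℤ) : ‖sf.dOmphiC θ ω x‖ = wt (-10) x * |sf.Φ' ω x| := by
  simp [dOmphiC, dphiF, Complex.norm_exp_I_mul_ofReal, abs_of_pos (wt_pos _ _)]

lemma add_single_mem_Hc_iff (u : L2) (c : ℂ) :
    u + lp.single 2 0 c ∈ sf.Hc θ ω ↔
      Om ⇑u (sf.dthphiC θ ω) + (exp (-(I * θ)) * c).re * sf.phiF ω 0 = 0 ∧
      Om ⇑u (sf.dOmphiC θ ω) - (exp (-(I * θ)) * c).im * sf.dphiF ω 0 = 0 := by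
  have hdth : Memℓp (sf.dthphiC θ ω) 2 := (lp.memℓp (sf.Φ ω)).mono' fun x => by
    rw [norm_dthphiC, Real.norm_eq_abs]
    exact mul_le_of_le_one_left (abs_nonneg _) (wt_le_one (by norm_num) x)
  have hdOm : Memℓp (sf.dOmphiC θ ω) 2 := (lp.memℓp (sf.Φ' ω)).mono' fun x => by
    rw [norm_dOmphiC, Real.norm_eq_abs]
    exact mul_le_of_le_one_left (abs_nonneg _) (wt_le_one (by norm_num) x)
  show Om _ _ = 0 ∧ Om _ _ = 0 ↔ _
  rw [Om_add_single u c hdth, Om_add_single u c hdOm]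
  simp only [dthphiC, dOmphiC, map_mul, Complex.conj_I, Complex.conj_ofReal, conj_exp_I_mul]
  have hdth0 : I * c * (-I * exp (-(I * θ)) * (sf.phiF ω 0 : ℂ))
      = exp (-(I * θ)) * c * (sf.phiF ω 0 : ℂ) := by
    linear_combination (-c * exp (-(I * θ)) * (sf.phiF ω 0 : ℂ)) * Complex.I_sq
  have hdOm0 : I * c * (exp (-(I * θ)) * (sf.dphiF ω 0 : ℂ))
      = I * (exp (-(I * θ)) * c) * (sf.dphiF ω 0 : ℂ) := by ring
  rw [hdth0, hdOm0, Complex.re_mul_ofReal, Complex.re_mul_ofReal, Complex.I_mul_re, neg_mul,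
    ← sub_eq_add_neg]

lemma add_single_mem_Hc_iff_eq_Qcoef (h0 : sf.phiF ω 0 ≠ 0) (h1 : sf.dphiF ω 0 ≠ 0)
    (u : L2) (c : ℂ) : u + lp.single 2 0 c ∈ sf.Hc θ ω ↔ c = Qcoef sf θ ω u := by
  rw [add_single_mem_Hc_iff, Qcoef, eq_exp_mul_iff]
  refine and_congr ⟨fun h => ?_, fun h => ?_⟩ ⟨fun h => ?_, fun h => ?_⟩
  · field_simp
    linarith
  · rw [h]; field_simp; ring
  · field_simp
    linarith
  · rw [h]; field_simp; ring

lemma P0perp_Qmap {u : L2} (hu : u 0 = 0) : P0perp (Qmap sf θ ω u) = u := by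
  rw [Qmap, P0perp_add_single_zero, P0perp_eq_self hu]

section Inverse

variable (h0 : sf.phiF ω 0 ≠ 0) (h1 : sf.dphiF ω 0 ≠ 0)
include h0 h1

lemma Qmap_mem_Hc (u : L2) : Qmap sf θ ω u ∈ sf.Hc θ ω :=
  (sf.add_single_mem_Hc_iff_eq_Qcoef h0 h1 u _).2 rfl

lemma eq_Qmap_P0perp {v : L2} (hv : v ∈ sf.Hc θ ω) : v = Qmap sf θ ω (P0perp v) := by
  rw [← P0perp_add_single_apply_zero v] at hv
  rw [Qmap, ← (sf.add_single_mem_Hc_iff_eq_Qcoef h0 h1 _ _).1 hv,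
    P0perp_add_single_apply_zero]

lemma bijOn_P0perp_Hc :
    Set.BijOn (fun u => P0perp u) (sf.Hc θ ω) {u : L2 | u 0 = 0} := by
  refine ⟨fun v _ => P0perp_apply_zero v, fun v₁ hv₁ v₂ hv₂ h => ?_, fun u hu => ?_⟩
  · rw [sf.eq_Qmap_P0perp h0 h1 hv₁, sf.eq_Qmap_P0perp h0 h1 hv₂]
    exact congrArg (Qmap sf θ ω) h
  · exact ⟨Qmap sf θ ω u, sf.Qmap_mem_Hc h0 h1 u, sf.P0perp_Qmap hu⟩

end Inverse

lemma abs_Om_le_norm_mul_norm_P0R {u : L2} (hu0 : u 0 = 0) (F : L2R)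
    (hF : ∀ x, F x = ‖u x‖ * wt (-1) x) {w : ℤ → ℂ} (G : L2R)
    (hw : ∀ x, ‖w x‖ = wt (-10) x * |G x|) : |Om ⇑u w| ≤ ‖F‖ * ‖P0R G‖ := by
  refine abs_Om_le_norm_mul_norm F (P0R G) fun x => ?_
  by_cases hx : x = 0
  · subst hx
    simp only [hu0, norm_zero, zero_mul]
    positivity
  · calc ‖u x‖ * ‖w x‖ = ‖u x‖ * wt (-10) x * |G x| := by rw [hw, mul_assoc]
      _ ≤ ‖u x‖ * wt (-1) x * |G x| := by gcongr; exact wt_mono (by norm_num) x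
      _ = ‖F x‖ * ‖P0R G x‖ := by
        rw [P0R_apply_of_ne G hx, hF, Real.norm_eq_abs, Real.norm_eq_abs,
          abs_of_nonneg (mul_nonneg (norm_nonneg (u x)) (wt_pos (-1) x).le)]

lemma norm_Qcoef_le (hω₀ : ω₀ < ω) (hω : 0 < ω) (hCω : 12 * C < ω) {u : L2} (hu0 : u 0 = 0)
    (F : L2R) (hF : ∀ x, F x = ‖u x‖ * wt (-1) x) :
    ‖Qcoef sf θ ω u‖ ≤ 14 * C * ω⁻¹ * ‖F‖ := by
  have hφ := sf.phiF_zero_ge hω₀ hω hCω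
  have hdφ := sf.dphiF_zero_ge hω₀ hω hCω
  have hΩ₁ := (abs_Om_le_norm_mul_norm_P0R hu0 F hF _ (sf.norm_dthphiC (θ := θ))).trans
    (mul_le_mul_of_nonneg_left (sf.norm_P0R_Φ_le hω₀ hω) (norm_nonneg F))
  have hΩ₂ := (abs_Om_le_norm_mul_norm_P0R hu0 F hF _ (sf.norm_dOmphiC (θ := θ))).trans
    (mul_le_mul_of_nonneg_left (sf.norm_P0R_Φ'_le hω₀ hω) (norm_nonneg F))
  have hP : 0 < ω ^ (-(5 : ℝ) / 6) := Real.rpow_pos_of_pos hω _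
  have hφpos : 0 < sf.phiF ω 0 := lt_of_lt_of_le (by positivity) hφ
  have hdφpos : 0 < sf.dphiF ω 0 := lt_of_lt_of_le (by positivity) hdφ
  rw [rpow_one_sixth_eq_mul hω] at hφ
  refine (norm_exp_mul_add_I_mul_le _ _ _).trans ?_
  calc |-(sf.phiF ω 0)⁻¹ * Om ⇑u (sf.dthphiC θ ω)|
        + |(sf.dphiF ω 0)⁻¹ * Om ⇑u (sf.dOmphiC θ ω)|
      = |Om ⇑u (sf.dthphiC θ ω)| / sf.phiF ω 0 + |Om ⇑u (sf.dOmphiC θ ω)| / sf.dphiF ω 0 := by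
        rw [abs_mul, abs_mul, abs_neg, abs_inv, abs_inv, abs_of_pos hφpos, abs_of_pos hdφpos,
          ← div_eq_inv_mul, ← div_eq_inv_mul]
    _ ≤ ‖F‖ * (C * ω ^ (-(5 : ℝ) / 6)) / (ω * ω ^ (-(5 : ℝ) / 6) / 2)
        + ‖F‖ * (C * ω ^ (-(5 : ℝ) / 6) / ω) / (ω ^ (-(5 : ℝ) / 6) / 12) := by
        gcongr
        · exact (abs_nonneg _).trans hΩ₁
        · exact (abs_nonneg _).trans hΩ₂
    _ = 14 * C * ω⁻¹ * ‖F‖ := by field_simp; ring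

lemma el2w_sub_Qmap_le (hω₀ : ω₀ < ω) (hω : 0 < ω) (hCω : 12 * C < ω) {u : L2}
    (hu0 : u 0 = 0) :
    el2w 1 (fun x => u x - Qmap sf θ ω u x)
      ≤ ENNReal.ofReal (14 * C * ω⁻¹) * el2w (-1) (fun x => u x) := by
  set F : L2R := ⟨_, memℓp_norm_mul_wt (by norm_num : (-1 : ℝ) ≤ 0) u⟩
  rw [el2w_eq_ofReal_norm F fun _ => rfl,
    el2w_eq_enorm_of_eq_zero fun x hx => by simp [Qmap_apply, hx], Qmap_apply,
    sub_add_cancel_left, Pi.single_eq_same, enorm_neg, ← ofReal_norm,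
    ← ENNReal.ofReal_mul (by positivity [sf.C_nonneg])]
  exact ENNReal.ofReal_le_ofReal (sf.norm_Qcoef_le hω₀ hω hCω hu0 F fun _ => rfl)

end SolitonFamily

/-- **Lemma 3.3**: for large `ω`, `P₀⊥|_{H_c[θ,ω]}` is a bijection onto
`P₀⊥l² = {u : u(0) = 0}`, its inverse is given by the explicit map `Q[θ,ω]`, and
`‖u - Q[θ,ω]u‖_{l²_1} ≤ K ω⁻¹ ‖u‖_{l²_{-1}}`. -/
theorem Q_inverse_lemma {ω₀ C : ℝ} (sf : SolitonFamily ω₀ C) :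
    ∃ ω₁ K : ℝ, ω₀ ≤ ω₁ ∧ 0 < K ∧
      ∀ ω θ : ℝ, ω₁ < ω →
        sf.phiF ω 0 ≠ 0 ∧
        sf.dphiF ω 0 ≠ 0 ∧
        Set.BijOn (fun u => P0perp u) (sf.Hc θ ω) {u : L2 | u 0 = 0} ∧
        ∀ u : L2, u 0 = 0 →
          Qmap sf θ ω u ∈ sf.Hc θ ω ∧
          P0perp (Qmap sf θ ω u) = u ∧
          (∀ v ∈ sf.Hc θ ω, P0perp v = u → v = Qmap sf θ ω u) ∧
          el2w 1 (fun x => u x - Qmap sf θ ω u x)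
            ≤ ENNReal.ofReal (K * ω⁻¹) * el2w (-1) (fun x => u x) := by
  have hC := sf.C_nonneg
  refine ⟨max ω₀ (12 * C), 14 * C + 1, le_max_left _ _, by positivity, fun ω θ hω => ?_⟩
  have hω₀ : ω₀ < ω := (le_max_left _ _).trans_lt hω
  have hωC : 12 * C < ω := (le_max_right _ _).trans_lt hω
  have hωpos : 0 < ω := by linarith
  have h0 : sf.phiF ω 0 ≠ 0 :=
    (lt_of_lt_of_le (by positivity) (sf.phiF_zero_ge hω₀ hωpos hωC)).ne'
  have h1 : sf.dphiF ω 0 ≠ 0 :=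
    (lt_of_lt_of_le (by positivity) (sf.dphiF_zero_ge hω₀ hωpos hωC)).ne'
  refine ⟨h0, h1, sf.bijOn_P0perp_Hc h0 h1, fun u hu0 => ⟨sf.Qmap_mem_Hc h0 h1 u,
    sf.P0perp_Qmap hu0, fun v hv hvu => hvu ▸ sf.eq_Qmap_P0perp h0 h1 hv, ?_⟩⟩
  refine (sf.el2w_sub_Qmap_le hω₀ hωpos hωC hu0).trans ?_
  gcongr
  linarith

end
end

section
/- Let φ_ω be the soliton of the appendix construction, φ_ω = ω^{1/6}( (1 + ω^{-1}ψ₀(ω^{-1}))δ₀ + Σ_{j≥1} ω^{-j}ψ_j(ω^{-1})(δ_j + δ_{-j}) ), where ψ : (-ε,ε) → l^∞(ℕ₀;ℝ) is real-analytic with ψ₀(0)=1/3 and ψ_j(0)=1 for j ≥ 1 and the expression solves 0 = -Δ_dφ_ω + ωφ_ω - |φ_ω|⁶φ_ω. Then there exist ω₁ > 0 and constants 0 < c ≤ K such that for all ω > ω₁ and all x ∈ ℤ: c·ω^{1/6 - |x|} ≤ |φ_ω(x)| ≤ K·ω^{1/6 - |x|} (sharp exponential decay of the soliton). -/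
noncomputable section

open scoped BigOperators ENNReal
open MeasureTheory Complex Filter

/-! The soliton factors as `φ_ω(x) = ω^{1/6-|x|} a_ω(x)` with `a_ω(0) = 1 + ω⁻¹ψ₀(ω⁻¹)` and
`a_ω(x) = ψ_{|x|}(ω⁻¹)` for `x ≠ 0`. Continuity of `ψ` at `0` in `l^∞` makes `a_ω → 1` uniformly
in `x` as `ω → ∞`, so `a_ω(x) ∈ [1/2, 3/2]` for all large `ω`. -/

theorem lp.norm_apply_sub_le_norm_sub {α : Type*} {E : α → Type*}
    [∀ i, NormedAddCommGroup (E i)] {p : ℝ≥0∞} (hp : p ≠ 0) (f g : lp E p) (i : α) :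
    ‖f i - g i‖ ≤ ‖f - g‖ := by
  simpa only [lp.coeFn_sub, Pi.sub_apply] using lp.norm_apply_le_norm hp (f - g) i

def phiProfile (ψ : ℝ → LinfN) (ω : ℝ) (x : ℤ) : ℝ :=
  if x = 0 then 1 + ω⁻¹ * ψ ω⁻¹ 0 else ψ ω⁻¹ x.natAbs

theorem phiOf_eq_rpow_mul_phiProfile (ψ : ℝ → LinfN) {ω : ℝ} (hω : 0 < ω) (x : ℤ) :
    phiOf ψ ω x = ω ^ ((1 : ℝ) / 6 - |(x : ℝ)|) * phiProfile ψ ω x := by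
  rw [sub_eq_add_neg, Real.rpow_add hω, mul_assoc, phiOf, phiProfile]
  by_cases hx : x = 0
  · simp [hx]
  · simp only [hx, if_false, Nat.cast_natAbs, Int.cast_abs]

theorem phiProfile_mem_Icc (ψ : ℝ → LinfN) {ω : ℝ} (hω : 2 ≤ ω)
    (h0 : |ψ ω⁻¹ 0| ≤ 1) (hj : ∀ j : ℕ, 1 ≤ j → |ψ ω⁻¹ j - 1| ≤ 1 / 2) (x : ℤ) :
    phiProfile ψ ω x ∈ Set.Icc (1 / 2 : ℝ) (3 / 2) := by
  unfold phiProfile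
  split_ifs with hx
  · have hinv : ω⁻¹ ≤ 1 / 2 := by rw [inv_le_comm₀ (by linarith) (by norm_num)]; linarith
    have hsmall : |ω⁻¹ * ψ ω⁻¹ 0| ≤ 1 / 2 := by
      rw [abs_mul, abs_of_pos (by positivity)]
      nlinarith [abs_nonneg (ψ ω⁻¹ 0), inv_pos.2 (show 0 < ω by linarith)]
    constructor <;> linarith [abs_le.1 hsmall]
  · have := abs_le.1 (hj x.natAbs (Int.natAbs_pos.2 hx))
    constructor <;> linarith

theorem eventually_phiProfile_mem_Icc (ψ : ℝ → LinfN) (hψ : ContinuousAt ψ 0)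
    (hψ0 : ψ 0 0 = 1 / 3) (hψ1 : ∀ j : ℕ, 1 ≤ j → ψ 0 j = 1) :
    ∀ᶠ ω in atTop, ∀ x : ℤ, phiProfile ψ ω x ∈ Set.Icc (1 / 2 : ℝ) (3 / 2) := by
  have hnear : ∀ᶠ ω in atTop, ‖ψ ω⁻¹ - ψ 0‖ < 1 / 2 := by
    simpa only [dist_eq_norm, Function.comp_apply] using
      (hψ.tendsto.comp tendsto_inv_atTop_zero).eventually (Metric.ball_mem_nhds _ one_half_pos)
  filter_upwards [hnear, eventually_ge_atTop 2] with ω hω hω2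
  have hcoord (j : ℕ) : |ψ ω⁻¹ j - ψ 0 j| < 1 / 2 :=
    (lp.norm_apply_sub_le_norm_sub (by simp) _ _ j).trans_lt hω
  refine phiProfile_mem_Icc ψ hω2 ?_ (fun j hj => by simpa [hψ1 j hj] using (hcoord j).le)
  have := abs_lt.1 (hcoord 0)
  rw [hψ0] at this
  exact abs_le.2 ⟨by linarith, by linarith⟩

theorem soliton_sharp_decay_general (ε : ℝ) (hε : 0 < ε) (ψ : ℝ → LinfN)
    (hψ : AnalyticOnNhd ℝ ψ (Set.Ioo (-ε) ε))
    (hψ0 : ψ 0 0 = 1 / 3)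
    (hψ1 : ∀ j : ℕ, 1 ≤ j → ψ 0 j = 1) :
    ∃ ω₁ c K : ℝ, 0 < ω₁ ∧ 0 < c ∧ c ≤ K ∧
      ∀ ω : ℝ, ω₁ < ω → ∀ x : ℤ,
        c * ω ^ ((1 : ℝ) / 6 - |(x : ℝ)|) ≤ |phiOf ψ ω x| ∧
        |phiOf ψ ω x| ≤ K * ω ^ ((1 : ℝ) / 6 - |(x : ℝ)|) := by
  have hψc : ContinuousAt ψ 0 := (hψ 0 ⟨by linarith, hε⟩).continuousAt
  obtain ⟨ω₁, hω₁⟩ := eventually_atTop.1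
    ((eventually_phiProfile_mem_Icc ψ hψc hψ0 hψ1).and (eventually_gt_atTop 0))
  refine ⟨max ω₁ 1, 1 / 2, 3 / 2, one_pos.trans_le (le_max_right _ _), by norm_num, by norm_num, fun ω hω x => ?_⟩
  obtain ⟨hprofile, hωpos⟩ := hω₁ ω (le_of_max_le_left hω.le)
  obtain ⟨hlo, hhi⟩ := hprofile x
  have hpow := Real.rpow_pos_of_pos hωpos ((1 : ℝ) / 6 - |(x : ℝ)|)
  rw [phiOf_eq_rpow_mul_phiProfile ψ hωpos, abs_of_pos (mul_pos hpow (by linarith))]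
  constructor <;> nlinarith

/-- **Sharp exponential decay of the soliton** (Remark A.2):
`|φ_ω(x)| ∼ ω^{1/6 - |x|}` for large `ω`, uniformly in `x`. -/
theorem soliton_sharp_decay (ε : ℝ) (hε : 0 < ε) (ψ : ℝ → LinfN)
    (hψ : AnalyticOnNhd ℝ ψ (Set.Ioo (-ε) ε))
    (hψ0 : ψ 0 0 = 1 / 3)
    (hψ1 : ∀ j : ℕ, 1 ≤ j → ψ 0 j = 1)
    (hsol : ∀ ω : ℝ, 1 / ε < ω → ∀ x : ℤ,
      (0 : ℝ) = -(lapR (phiOf ψ ω) x) + ω * phiOf ψ ω x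
        - |phiOf ψ ω x| ^ 6 * phiOf ψ ω x) :
    ∃ ω₁ c K : ℝ, 0 < ω₁ ∧ 0 < c ∧ c ≤ K ∧
      ∀ ω : ℝ, ω₁ < ω → ∀ x : ℤ,
        c * ω ^ ((1 : ℝ) / 6 - |(x : ℝ)|) ≤ |phiOf ψ ω x| ∧
        |phiOf ψ ω x| ≤ K * ω ^ ((1 : ℝ) / 6 - |(x : ℝ)|) :=
  soliton_sharp_decay_general ε hε ψ hψ hψ0 hψ1

end
end
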